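/- For the gradient flow Ḟ(t) = −Δ F(t) WᵀW with arbitrary W ∈ ℝ^{d×d}, the Dirichlet energy satisfies E^Dir(F(t)) ≤ e^{−2t·gap(WᵀW)·gap(Δ)}·λ_{n−1}·‖F(0)‖² + E^Dir(F(0) projected channel-wise onto ker(WᵀW)) for all t ≥ 0; in particular if W is invertible then E^Dir(F(t)) → 0 exponentially. -/

import Mathlib

/-!
Let `S = WᵀW` and `Q = 1 - P`. Since `S P = 0`, the component `F P` is constant along the flow,
and the energy splits as `E(F) = E(F Q) + E(F P)`. The component `G = F Q` solves the same flow
and its rows stay in `(ker S)ᗮ`, so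
`E(G)' = -2 tr(ΔG S (ΔG)ᵀ) ≤ -2 gap(S) tr(Gᵀ Δ² G) ≤ -2 gap(S) gap(Δ) E(G)`,
by `gap(S) Q ≤ S` and `gap(Δ) Δ ≤ Δ²` in the Loewner order. Grönwall's inequality then gives
`E(G(t)) ≤ e^{-2t gap(S) gap(Δ)} E(G(0))`, and `E(G(0)) ≤ E(F(0)) ≤ λ_max ‖F(0)‖²`.
For invertible `W` the kernel of `S` is trivial, so `P = 0`.
-/

open Matrix Finset Filter

lemma Matrix.IsSymm.dotProduct_mulVec_comm {ι : Type*} [Fintype ι] {A : Matrix ι ι ℝ}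
    (hA : A.IsSymm) (x y : ι → ℝ) : x ⬝ᵥ (A *ᵥ y) = (A *ᵥ x) ⬝ᵥ y := by
  rw [dotProduct_mulVec, ← mulVec_transpose, hA.eq]

namespace Matrix.IsHermitian

variable {ι : Type*} [Fintype ι] [DecidableEq ι] {A : Matrix ι ι ℝ} (hA : A.IsHermitian)

lemma sum_eigenvectorBasis_dotProduct_mul (x y : ι → ℝ) :
    ∑ i, (hA.eigenvectorBasis i ⬝ᵥ x) * (hA.eigenvectorBasis i ⬝ᵥ y) = x ⬝ᵥ y := by
  simpa [EuclideanSpace.inner_eq_star_dotProduct, dotProduct_comm] using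
    hA.eigenvectorBasis.sum_inner_mul_inner (WithLp.toLp 2 x) (WithLp.toLp 2 y)

lemma eigenvectorBasis_dotProduct_mulVec (x : ι → ℝ) (i : ι) :
    hA.eigenvectorBasis i ⬝ᵥ (A *ᵥ x) = hA.eigenvalues i * (hA.eigenvectorBasis i ⬝ᵥ x) := by
  rw [(isHermitian_iff_isSymm.1 hA).dotProduct_mulVec_comm, hA.mulVec_eigenvectorBasis]
  simp

lemma dotProduct_mulVec_eq_sum (x : ι → ℝ) :
    x ⬝ᵥ (A *ᵥ x) = ∑ i, hA.eigenvalues i * (hA.eigenvectorBasis i ⬝ᵥ x) ^ 2 := by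
  rw [← hA.sum_eigenvectorBasis_dotProduct_mul]
  refine sum_congr rfl fun i _ => ?_
  rw [hA.eigenvectorBasis_dotProduct_mulVec]
  ring

lemma dotProduct_mulVec_le_mul_dotProduct {L : ℝ} (hL : ∀ i, hA.eigenvalues i ≤ L)
    (x : ι → ℝ) : x ⬝ᵥ (A *ᵥ x) ≤ L * (x ⬝ᵥ x) := by
  rw [hA.dotProduct_mulVec_eq_sum, ← hA.sum_eigenvectorBasis_dotProduct_mul, mul_sum]
  exact sum_le_sum fun i _ => by nlinarith [hL i, sq_nonneg (hA.eigenvectorBasis i ⬝ᵥ x)]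

end Matrix.IsHermitian

namespace Matrix.PosSemidef

variable {ι : Type*} [Fintype ι] [DecidableEq ι] {A : Matrix ι ι ℝ} (hA : A.PosSemidef)
  {g : ℝ} (hg : ∀ i, 0 < hA.isHermitian.eigenvalues i → g ≤ hA.isHermitian.eigenvalues i)
include hg

lemma mul_eigenvalue_le_sq (i : ι) :
    g * hA.isHermitian.eigenvalues i ≤ hA.isHermitian.eigenvalues i ^ 2 := by
  rcases (hA.eigenvalues_nonneg i).lt_or_eq with hpos | hzero
  · nlinarith [hg i hpos]
  · simp [← hzero]

lemma mul_dotProduct_mulVec_le_dotProduct_mul_self_mulVec (x : ι → ℝ) :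
    g * (x ⬝ᵥ (A *ᵥ x)) ≤ x ⬝ᵥ ((A * A) *ᵥ x) := by
  have hA' := hA.isHermitian
  rw [← mulVec_mulVec, (isHermitian_iff_isSymm.1 hA').dotProduct_mulVec_comm x (A *ᵥ x),
    hA'.dotProduct_mulVec_eq_sum, ← hA'.sum_eigenvectorBasis_dotProduct_mul, mul_sum]
  refine sum_le_sum fun i _ => ?_
  rw [hA'.eigenvectorBasis_dotProduct_mulVec]
  nlinarith [hA.mul_eigenvalue_le_sq hg i, sq_nonneg (hA'.eigenvectorBasis i ⬝ᵥ x)]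

lemma mul_dotProduct_le_dotProduct_mulVec {x : ι → ℝ}
    (hx : ∀ y, A *ᵥ y = 0 → x ⬝ᵥ y = 0) : g * (x ⬝ᵥ x) ≤ x ⬝ᵥ (A *ᵥ x) := by
  have hA' := hA.isHermitian
  rw [hA'.dotProduct_mulVec_eq_sum, ← hA'.sum_eigenvectorBasis_dotProduct_mul, mul_sum]
  refine sum_le_sum fun i _ => ?_
  rcases (hA.eigenvalues_nonneg i).lt_or_eq with hpos | hzero
  · nlinarith [hg i hpos, sq_nonneg (hA'.eigenvectorBasis i ⬝ᵥ x)]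
  · have hker : A *ᵥ hA'.eigenvectorBasis i = 0 := by
      rw [hA'.mulVec_eigenvectorBasis, ← hzero, zero_smul]
    rw [dotProduct_comm, hx _ hker]
    simp

end Matrix.PosSemidef

section Projection

variable {ι : Type*} [Fintype ι] {P A : Matrix ι ι ℝ}

lemma Matrix.IsSymm.dotProduct_mulVec_eq_of_isIdempotentElem (hPs : P.IsSymm)
    (hPi : IsIdempotentElem P) (x : ι → ℝ) : x ⬝ᵥ (P *ᵥ x) = (P *ᵥ x) ⬝ᵥ (P *ᵥ x) := by
  conv_lhs => rw [← hPi.eq, ← mulVec_mulVec, hPs.dotProduct_mulVec_comm]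

lemma mulVec_eq_self_of_range_eq_ker (hPi : IsIdempotentElem P)
    (h : LinearMap.range P.mulVecLin = LinearMap.ker A.mulVecLin) {y : ι → ℝ}
    (hy : A *ᵥ y = 0) : P *ᵥ y = y := by
  obtain ⟨z, rfl⟩ : y ∈ LinearMap.range P.mulVecLin := h ▸ hy
  simp [mulVec_mulVec, hPi.eq]

variable [DecidableEq ι]

lemma mul_eq_zero_of_range_eq_ker (h : LinearMap.range P.mulVecLin = LinearMap.ker A.mulVecLin) :
    A * P = 0 := by
  apply toLin'.injective
  rw [toLin'_apply', mulVecLin_mul, LinearMap.range_le_ker_iff.1 h.le, map_zero]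

lemma eq_zero_of_range_eq_ker_of_isUnit
    (h : LinearMap.range P.mulVecLin = LinearMap.ker A.mulVecLin) (hA : IsUnit A) : P = 0 := by
  simpa using mul_eq_zero_of_range_eq_ker h |> hA.mul_right_eq_zero.1

lemma Matrix.PosSemidef.mul_dotProduct_one_sub_mulVec_le (hA : A.PosSemidef) {g : ℝ}
    (hg : ∀ i, 0 < hA.isHermitian.eigenvalues i → g ≤ hA.isHermitian.eigenvalues i)
    (hPs : P.IsSymm) (hPi : IsIdempotentElem P)
    (h : LinearMap.range P.mulVecLin = LinearMap.ker A.mulVecLin) (x : ι → ℝ) :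
    g * (x ⬝ᵥ ((1 - P) *ᵥ x)) ≤ x ⬝ᵥ (A *ᵥ x) := by
  set y := (1 - P) *ᵥ x
  have hAy : A *ᵥ y = A *ᵥ x := by
    rw [mulVec_mulVec, Matrix.mul_sub, mul_eq_zero_of_range_eq_ker h, mul_one, sub_zero]
  have hquad : x ⬝ᵥ (A *ᵥ x) = y ⬝ᵥ (A *ᵥ y) := by
    rw [← hAy, (isHermitian_iff_isSymm.1 hA.isHermitian).dotProduct_mulVec_comm, hAy,
      dotProduct_comm]
  have hperp : ∀ z, A *ᵥ z = 0 → y ⬝ᵥ z = 0 := by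
    intro z hz
    rw [← mulVec_eq_self_of_range_eq_ker hPi h hz, hPs.dotProduct_mulVec_comm, mulVec_mulVec,
      Matrix.mul_sub, mul_one, hPi.eq, sub_self, zero_mulVec, zero_dotProduct]
  rw [(isSymm_one.sub hPs).dotProduct_mulVec_eq_of_isIdempotentElem hPi.one_sub, hquad]
  exact hA.mul_dotProduct_le_dotProduct_mulVec hg hperp

end Projection

section Trace

variable {ι m : Type*} [Fintype ι] [Fintype m]

lemma trace_transpose_mul_mul_eq_sum (A : Matrix ι ι ℝ) (M : Matrix ι m ℝ) :
    (Mᵀ * A * M).trace = ∑ r, Mᵀ r ⬝ᵥ (A *ᵥ Mᵀ r) := by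
  simp only [trace, diag_apply, mul_apply, transpose_apply, dotProduct, mulVec, sum_mul, mul_sum]
  refine sum_congr rfl fun r _ => ?_
  rw [sum_comm]
  exact sum_congr rfl fun i _ => sum_congr rfl fun j _ => by ring

lemma mul_trace_transpose_mul_mul_le {a b : ℝ} {A B : Matrix ι ι ℝ}
    (h : ∀ x, a * (x ⬝ᵥ (A *ᵥ x)) ≤ b * (x ⬝ᵥ (B *ᵥ x))) (M : Matrix ι m ℝ) :
    a * (Mᵀ * A * M).trace ≤ b * (Mᵀ * B * M).trace := by
  simp only [trace_transpose_mul_mul_eq_sum, mul_sum]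
  exact sum_le_sum fun r _ => h _

end Trace

def dirichletEnergy {n d : Type*} [Fintype n] [Fintype d] (Δ : Matrix n n ℝ)
    (M : Matrix n d ℝ) : ℝ :=
  (Mᵀ * Δ * M).trace

section DirichletEnergy

variable {n d : Type*} [Fintype n] [Fintype d] {Δ : Matrix n n ℝ}

lemma dirichletEnergy_nonneg (hΔ : Δ.PosSemidef) (M : Matrix n d ℝ) :
    0 ≤ dirichletEnergy Δ M := by
  simpa [dirichletEnergy] using (hΔ.conjTranspose_mul_mul_same M).trace_nonneg

lemma dirichletEnergy_mul_of_isIdempotentElem {R : Matrix d d ℝ} (hRs : R.IsSymm)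
    (hRi : IsIdempotentElem R) (M : Matrix n d ℝ) :
    dirichletEnergy Δ (M * R) = (Mᵀ * Δ * M * R).trace := by
  rw [dirichletEnergy, transpose_mul, hRs.eq,
    show R * Mᵀ * Δ * (M * R) = R * (Mᵀ * Δ * M * R) by simp only [Matrix.mul_assoc],
    trace_mul_comm, Matrix.mul_assoc _ R R, hRi.eq]

lemma dirichletEnergy_eq_add [DecidableEq d] {P : Matrix d d ℝ} (hPs : P.IsSymm)
    (hPi : IsIdempotentElem P) (M : Matrix n d ℝ) :
    dirichletEnergy Δ M = dirichletEnergy Δ (M * (1 - P)) + dirichletEnergy Δ (M * P) := by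
  rw [dirichletEnergy_mul_of_isIdempotentElem (isSymm_one.sub hPs) hPi.one_sub,
    dirichletEnergy_mul_of_isIdempotentElem hPs hPi, ← trace_add, ← Matrix.mul_add,
    sub_add_cancel, mul_one, dirichletEnergy]

lemma dirichletEnergy_le_mul_sum_sq [DecidableEq n] (hΔ : Δ.IsHermitian) {L : ℝ}
    (hL : ∀ i, hΔ.eigenvalues i ≤ L) (M : Matrix n d ℝ) :
    dirichletEnergy Δ M ≤ L * ∑ i, ∑ r, M i r ^ 2 := by
  calc dirichletEnergy Δ M = ∑ r, Mᵀ r ⬝ᵥ (Δ *ᵥ Mᵀ r) := trace_transpose_mul_mul_eq_sum Δ M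
    _ ≤ ∑ r, L * (Mᵀ r ⬝ᵥ Mᵀ r) :=
      sum_le_sum fun r _ => hΔ.dotProduct_mulVec_le_mul_dotProduct hL _
    _ = L * ∑ i, ∑ r, M i r ^ 2 := by
      rw [← mul_sum, sum_comm]
      simp [dotProduct, sq]

lemma hasDerivAt_dirichletEnergy (hΔ : Δ.IsSymm) {F : ℝ → Matrix n d ℝ} {F' : Matrix n d ℝ}
    {t : ℝ} (hF : ∀ i r, HasDerivAt (fun s => F s i r) (F' i r) t) :
    HasDerivAt (fun s => dirichletEnergy Δ (F s)) (2 * ((F t)ᵀ * Δ * F').trace) t := by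
  have h : HasDerivAt (fun s => dirichletEnergy Δ (F s))
      ((F'ᵀ * Δ * F t).trace + ((F t)ᵀ * Δ * F').trace) t := by
    simp only [dirichletEnergy, trace, diag_apply, mul_apply, transpose_apply, ← sum_add_distrib]
    exact HasDerivAt.fun_sum fun r _ => HasDerivAt.fun_sum fun j _ =>
      (HasDerivAt.fun_sum fun i _ => (hF i r).mul_const _).mul (hF j r)
  convert h using 1
  rw [← trace_transpose (F'ᵀ * Δ * F t)]
  simp only [Matrix.mul_assoc, transpose_mul, hΔ.eq, transpose_transpose]
  ring

end DirichletEnergy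

lemma le_exp_mul_of_hasDerivAt_le_neg_mul {f f' : ℝ → ℝ} {c : ℝ}
    (hf : ∀ t, HasDerivAt f (f' t) t)
    (hbound : ∀ t, f' t ≤ -c * f t) {t : ℝ} (ht : 0 ≤ t) : f t ≤ Real.exp (-c * t) * f 0 := by
  have h := le_gronwallBound_of_liminf_deriv_right_le (δ := f 0) (K := -c) (ε := 0) (b := t)
    (fun x _ => (hf x).continuousAt.continuousWithinAt)
    (fun x _ r hr => (hf x).hasDerivWithinAt.liminf_right_slope_le hr) le_rfl
    (fun x _ => (hbound x).trans_eq (add_zero _).symm) t ⟨ht, le_rfl⟩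
  simpa [gronwallBound_ε0, mul_comm] using h

section Flow

variable {n d k : Type*} [Fintype d]

lemma hasDerivAt_mul_apply {F : ℝ → Matrix n d ℝ} {F' : Matrix n d ℝ} {t : ℝ}
    (hF : ∀ i r, HasDerivAt (fun s => F s i r) (F' i r) t) (R : Matrix d k ℝ) (i : n) (r : k) :
    HasDerivAt (fun s => (F s * R) i r) ((F' * R) i r) t := by
  simp only [mul_apply]
  exact HasDerivAt.fun_sum fun j _ => (hF i j).mul_const _

lemma mul_eq_of_hasDerivAt_mul_eq_zero {F F' : ℝ → Matrix n d ℝ}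
    (hF : ∀ t i r, HasDerivAt (fun s => F s i r) (F' t i r) t) {R : Matrix d k ℝ}
    (hR : ∀ t, F' t * R = 0) (t : ℝ) : F t * R = F 0 * R := by
  ext i r
  have h s := hasDerivAt_mul_apply (hF s) R i r
  exact is_const_of_deriv_eq_zero (fun s => (h s).differentiableAt)
    (fun s => by rw [(h s).deriv, hR]; rfl) t 0

variable [Fintype n] {Δ : Matrix n n ℝ} {S Q : Matrix d d ℝ}

lemma hasDerivAt_mul_of_flow {F : ℝ → Matrix n d ℝ}
    (hF : ∀ t i r, HasDerivAt (fun s => F s i r) ((-(Δ * F t * S)) i r) t)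
    (hQS : Q * S = S) (hSQ : S * Q = S) (t : ℝ) (i : n) (r : d) :
    HasDerivAt (fun s => (F s * Q) i r) ((-(Δ * (F t * Q) * S)) i r) t := by
  convert hasDerivAt_mul_apply (hF t) Q i r using 2
  simp only [Matrix.mul_assoc, hQS, hSQ, Matrix.neg_mul]

variable (hΔ : Δ.IsSymm)
include hΔ

lemma hasDerivAt_dirichletEnergy_of_flow {G : ℝ → Matrix n d ℝ} {t : ℝ}
    (hG : ∀ i r, HasDerivAt (fun s => G s i r) ((-(Δ * G t * S)) i r) t) :
    HasDerivAt (fun s => dirichletEnergy Δ (G s)) (-2 * dirichletEnergy S (Δ * G t)ᵀ) t := by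
  convert hasDerivAt_dirichletEnergy hΔ hG using 1
  rw [dirichletEnergy, transpose_transpose, transpose_mul, hΔ.eq, Matrix.mul_neg, trace_neg,
    trace_mul_comm]
  ring

lemma mul_dirichletEnergy_le_of_mul_eq_self {gΔ gS : ℝ} (hgS : 0 ≤ gS)
    (hΔgap : ∀ x, gΔ * (x ⬝ᵥ (Δ *ᵥ x)) ≤ x ⬝ᵥ ((Δ * Δ) *ᵥ x))
    (hSgap : ∀ x, gS * (x ⬝ᵥ (Q *ᵥ x)) ≤ x ⬝ᵥ (S *ᵥ x)) {G : Matrix n d ℝ} (hGQ : G * Q = G) :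
    gS * gΔ * dirichletEnergy Δ G ≤ dirichletEnergy S (Δ * G)ᵀ := by
  have hΔΔ : gΔ * dirichletEnergy Δ G ≤ (Gᵀ * (Δ * Δ) * G).trace := by
    simpa [dirichletEnergy] using
      mul_trace_transpose_mul_mul_le (b := 1) (fun x => by simpa using hΔgap x) G
  have hS : gS * (Gᵀ * (Δ * Δ) * G).trace ≤ dirichletEnergy S (Δ * G)ᵀ := by
    have h := mul_trace_transpose_mul_mul_le (b := 1) (fun x => by simpa using hSgap x) (Δ * G)ᵀ
    rw [transpose_transpose, Matrix.mul_assoc Δ G Q, hGQ, trace_mul_comm, transpose_mul,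
      hΔ.eq, one_mul] at h
    simpa [dirichletEnergy, Matrix.mul_assoc, hΔ.eq] using h
  calc gS * gΔ * dirichletEnergy Δ G ≤ gS * (Gᵀ * (Δ * Δ) * G).trace := by
        rw [mul_assoc]; exact mul_le_mul_of_nonneg_left hΔΔ hgS
    _ ≤ dirichletEnergy S (Δ * G)ᵀ := hS

theorem dirichletEnergy_le_exp_mul_of_flow {gΔ gS : ℝ} (hgS : 0 ≤ gS)
    (hΔgap : ∀ x, gΔ * (x ⬝ᵥ (Δ *ᵥ x)) ≤ x ⬝ᵥ ((Δ * Δ) *ᵥ x))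
    (hSgap : ∀ x, gS * (x ⬝ᵥ (Q *ᵥ x)) ≤ x ⬝ᵥ (S *ᵥ x)) {G : ℝ → Matrix n d ℝ}
    (hGQ : ∀ t, G t * Q = G t)
    (hG : ∀ t i r, HasDerivAt (fun s => G s i r) ((-(Δ * G t * S)) i r) t) {t : ℝ} (ht : 0 ≤ t) :
    dirichletEnergy Δ (G t) ≤ Real.exp (-(2 * t * gS * gΔ)) * dirichletEnergy Δ (G 0) := by
  have h := le_exp_mul_of_hasDerivAt_le_neg_mul (c := 2 * (gS * gΔ))
    (fun s => hasDerivAt_dirichletEnergy_of_flow hΔ (hG s))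
    (fun s => by nlinarith [mul_dirichletEnergy_le_of_mul_eq_self hΔ hgS hΔgap hSgap (hGQ s)]) ht
  convert h using 3
  ring

end Flow

theorem dirichletEnergy_le_exp_mul_add_of_flow {n d : Type*} [Fintype n] [DecidableEq n]
    [Fintype d] [DecidableEq d] {Δ : Matrix n n ℝ} (hΔ : Δ.PosSemidef) {S P : Matrix d d ℝ}
    (hS : S.PosSemidef) {gΔ gS L : ℝ}
    (hgΔ : ∀ i, 0 < hΔ.isHermitian.eigenvalues i → gΔ ≤ hΔ.isHermitian.eigenvalues i)
    (hgS₀ : 0 ≤ gS)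
    (hgS : ∀ i, 0 < hS.isHermitian.eigenvalues i → gS ≤ hS.isHermitian.eigenvalues i)
    (hL : ∀ i, hΔ.isHermitian.eigenvalues i ≤ L) (hPs : P.IsSymm) (hPi : IsIdempotentElem P)
    (hPker : LinearMap.range P.mulVecLin = LinearMap.ker S.mulVecLin) {F : ℝ → Matrix n d ℝ}
    (hF : ∀ t i r, HasDerivAt (fun s => F s i r) ((-(Δ * F t * S)) i r) t) {t : ℝ} (ht : 0 ≤ t) :
    dirichletEnergy Δ (F t) ≤
      Real.exp (-(2 * t * gS * gΔ)) * L * ∑ i, ∑ r, F 0 i r ^ 2 + dirichletEnergy Δ (F 0 * P) := by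
  have hSP : S * P = 0 := mul_eq_zero_of_range_eq_ker hPker
  have hPS : P * S = 0 := by
    simpa [hPs.eq, (isHermitian_iff_isSymm.1 hS.isHermitian).eq] using congrArg transpose hSP
  have hFP : ∀ t, F t * P = F 0 * P := mul_eq_of_hasDerivAt_mul_eq_zero hF fun t => by
    rw [Matrix.neg_mul, Matrix.mul_assoc, hSP, Matrix.mul_zero, neg_zero]
  have hdecay := dirichletEnergy_le_exp_mul_of_flow (isHermitian_iff_isSymm.1 hΔ.isHermitian) hgS₀
    (hΔ.mul_dotProduct_mulVec_le_dotProduct_mul_self_mulVec hgΔ)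
    (hS.mul_dotProduct_one_sub_mulVec_le hgS hPs hPi hPker) (G := fun t => F t * (1 - P))
    (fun t => by rw [Matrix.mul_assoc, hPi.one_sub.eq])
    (hasDerivAt_mul_of_flow hF (by rw [Matrix.sub_mul, hPS, Matrix.one_mul, sub_zero])
      (by rw [Matrix.mul_sub, hSP, Matrix.mul_one, sub_zero])) ht
  have hinit : dirichletEnergy Δ (F 0 * (1 - P)) ≤ L * ∑ i, ∑ r, F 0 i r ^ 2 := by
    linarith [dirichletEnergy_eq_add (Δ := Δ) hPs hPi (F 0), dirichletEnergy_nonneg hΔ (F 0 * P),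
      dirichletEnergy_le_mul_sum_sq hΔ.isHermitian hL (F 0)]
  rw [dirichletEnergy_eq_add hPs hPi (F t), hFP t, mul_assoc]
  gcongr ?_ + _
  exact hdecay.trans (mul_le_mul_of_nonneg_left hinit (Real.exp_pos _).le)

/-- For the gradient flow Ḟ(t) = −Δ F(t) WᵀW,
E^Dir(F(t)) ≤ e^{−2t·gap(WᵀW)·gap(Δ)}·λ_{n−1}·‖F(0)‖² + E^Dir(F(0) P) for t ≥ 0,
where P is the orthogonal projection onto ker(WᵀW); in particular if W is
invertible then E^Dir(F(t)) → 0 (exponentially). -/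
theorem positive_metric_gradient_flow_smoothing (n d : ℕ)
    (Δ : Matrix (Fin n) (Fin n) ℝ) (hpsd : Δ.PosSemidef)
    (W : Matrix (Fin d) (Fin d) ℝ)
    (hSher : (Wᵀ * W).IsHermitian)
    (gW gΔ lamMax : ℝ)
    (hgW : IsLeast {x | x ∈ Set.range hSher.eigenvalues ∧ 0 < x} gW)
    (hgΔ : IsLeast {x | x ∈ Set.range hpsd.isHermitian.eigenvalues ∧ 0 < x} gΔ)
    (hlamMax : IsGreatest (Set.range hpsd.isHermitian.eigenvalues) lamMax)
    (P : Matrix (Fin d) (Fin d) ℝ) (hPsymm : P.IsSymm) (hPidem : P * P = P)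
    (hPrange : LinearMap.range P.mulVecLin = LinearMap.ker (Wᵀ * W).mulVecLin)
    (F : ℝ → Matrix (Fin n) (Fin d) ℝ)
    (hF : ∀ t i r, HasDerivAt (fun s => F s i r) ((-(Δ * F t * (Wᵀ * W))) i r) t) :
    (∀ t : ℝ, 0 ≤ t →
      ((F t)ᵀ * Δ * F t).trace ≤
        Real.exp (-(2 * t * gW * gΔ)) * lamMax * (∑ i, ∑ r, (F 0 i r) ^ 2)
          + ((F 0 * P)ᵀ * Δ * (F 0 * P)).trace) ∧
    (IsUnit W → Tendsto (fun t => ((F t)ᵀ * Δ * F t).trace) atTop (nhds 0)) := by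
  have hSpsd : (Wᵀ * W).PosSemidef := by simpa using posSemidef_conjTranspose_mul_self W
  have hbound : ∀ t : ℝ, 0 ≤ t → dirichletEnergy Δ (F t) ≤
      Real.exp (-(2 * t * gW * gΔ)) * lamMax * (∑ i, ∑ r, (F 0 i r) ^ 2)
        + dirichletEnergy Δ (F 0 * P) := fun t =>
    dirichletEnergy_le_exp_mul_add_of_flow hpsd hSpsd (fun i h => hgΔ.2 ⟨⟨i, rfl⟩, h⟩)
      hgW.1.2.le (fun i h => hgW.2 ⟨⟨i, rfl⟩, h⟩) (fun i => hlamMax.2 ⟨i, rfl⟩) hPsymm hPidem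
      hPrange hF
  refine ⟨hbound, fun hW => ?_⟩
  have hP : P = 0 := eq_zero_of_range_eq_ker_of_isUnit hPrange
    ((isUnit_transpose W).2 hW |>.mul hW)
  have hexp : Tendsto (fun t => Real.exp (-(2 * t * gW * gΔ))) atTop (nhds 0) :=
    Real.tendsto_exp_neg_atTop_nhds_zero.comp <|
      ((tendsto_id.const_mul_atTop two_pos).atTop_mul_const hgW.1.2).atTop_mul_const hgΔ.1.2
  refine tendsto_of_tendsto_of_tendsto_of_le_of_le' tendsto_const_nhds
    (by simpa using (hexp.mul_const lamMax).mul_const (∑ i, ∑ r, F 0 i r ^ 2))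
    (Eventually.of_forall fun t => dirichletEnergy_nonneg hpsd (F t)) ?_
  filter_upwards [eventually_ge_atTop 0] with t ht
  simpa [hP, dirichletEnergy] using hbound t ht
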